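/- arXiv:2010.11707 — 2 statements merged into one kernel-verified Lean document; each statement's English description precedes it below -/
import Mathlib

section
/- For any two positive invertible operators ρ and σ on a finite-dimensional Hilbert space and any q ∈ [0,1), the Tsallis relative operator entropy satisfies ρ - ρσ⁻¹ρ ≤ T_q(ρ||σ) ≤ σ - ρ in the Loewner order. -/
open Matrix
open scoped ComplexOrder

/-- Real power of a Hermitian matrix via its spectral decomposition
(defined to be `0` on non-Hermitian matrices). -/
noncomputable def mpow {d : ℕ} (A : Matrix (Fin d) (Fin d) ℂ) (r : ℝ) :
    Matrix (Fin d) (Fin d) ℂ :=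
  if hA : A.IsHermitian then
    (hA.eigenvectorUnitary : Matrix (Fin d) (Fin d) ℂ) *
      Matrix.diagonal (fun i => ((hA.eigenvalues i ^ r : ℝ) : ℂ)) *
      star (hA.eigenvectorUnitary : Matrix (Fin d) (Fin d) ℂ)
  else 0

/-- The Tsallis relative operator entropy
`T_q(ρ‖σ) = (ρ^{1/2} (ρ^{-1/2} σ ρ^{-1/2})^{1-q} ρ^{1/2} - ρ)/(1-q)`. -/
noncomputable def Tq {d : ℕ} (ρ σ : Matrix (Fin d) (Fin d) ℂ) (q : ℝ) :
    Matrix (Fin d) (Fin d) ℂ :=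
  (((1 - q : ℝ) : ℂ))⁻¹ •
    (mpow ρ (1/2) * mpow (mpow ρ (-(1/2)) * σ * mpow ρ (-(1/2))) (1 - q) * mpow ρ (1/2) - ρ)

/-!
Write `P = ρ^{1/2}` and `A = ρ^{-1/2} σ ρ^{-1/2}`, a positive definite matrix. Then
`ρ - ρσ⁻¹ρ`, `T_q(ρ‖σ)` and `σ - ρ` are `P f(A) P` for the functions `f x = 1 - x⁻¹`,
`ln_q x = (x^{1-q} - 1)/(1 - q)` and `f x = x - 1` respectively. Since the functional calculus and
congruence by the self-adjoint `P` are monotone, the bounds reduce to the scalar inequalities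
`1 - x⁻¹ ≤ log x ≤ ln_q x ≤ x - 1` for `x > 0`, the last one being Bernoulli's inequality.
-/

open scoped MatrixOrder

namespace Real

noncomputable def tsallisLog (q x : ℝ) : ℝ := (x ^ (1 - q) - 1) / (1 - q)

lemma one_sub_inv_le_tsallisLog {q x : ℝ} (hq : q < 1) (hx : 0 < x) :
    1 - x⁻¹ ≤ tsallisLog q x := by
  have hp : 0 < 1 - q := by linarith
  have hexp : 1 + (1 - q) * log x ≤ x ^ (1 - q) := by
    rw [rpow_def_of_pos hx, mul_comm (log x)]
    linarith [add_one_le_exp ((1 - q) * log x)]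
  calc 1 - x⁻¹ ≤ log x := one_sub_inv_le_log_of_pos hx
    _ ≤ tsallisLog q x := by
      rw [tsallisLog, le_div_iff₀ hp]
      linarith

lemma tsallisLog_le_sub_one {q x : ℝ} (hq0 : 0 ≤ q) (hq1 : q < 1) (hx : 0 < x) :
    tsallisLog q x ≤ x - 1 := by
  have hp : 0 < 1 - q := by linarith
  have bernoulli := rpow_one_add_le_one_add_mul_self (s := x - 1) (by linarith) hp.le
    (by linarith)
  rw [add_sub_cancel] at bernoulli
  rw [tsallisLog, div_le_iff₀ hp]
  linarith

end Real

lemma Matrix.conjugate_cfc_le_conjugate_cfc {𝕜 n : Type*} [RCLike 𝕜] [Fintype n] [DecidableEq n]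
    {A C : Matrix n n 𝕜} (hC : IsSelfAdjoint C) {f g : ℝ → ℝ}
    (h : ∀ x ∈ spectrum ℝ A, f x ≤ g x) : C * cfc f A * C ≤ C * cfc g A * C :=
  IsSelfAdjoint.conjugate_le_conjugate
    (cfc_mono h (finite_real_spectrum.continuousOn _) (finite_real_spectrum.continuousOn _)) hC

section mpow

variable {d : ℕ} {A : Matrix (Fin d) (Fin d) ℂ}

lemma mpow_eq_cfc (hA : A.IsHermitian) (r : ℝ) : mpow A r = cfc (fun x : ℝ => x ^ r) A := by
  rw [hA.cfc_eq, mpow, dif_pos hA, IsHermitian.cfc, Unitary.conjStarAlgAut_apply]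
  rfl

lemma isSelfAdjoint_mpow (hA : A.IsHermitian) (r : ℝ) : IsSelfAdjoint (mpow A r) :=
  mpow_eq_cfc hA r ▸ cfc_predicate _ A

lemma mpow_zero (hA : A.IsHermitian) : mpow A 0 = 1 := by
  simp [mpow_eq_cfc hA, cfc_const_one ℝ A]

lemma mpow_one (hA : A.IsHermitian) : mpow A 1 = A := by
  simp [mpow_eq_cfc hA, cfc_id' ℝ A]

lemma Matrix.PosDef.spectrum_pos (hA : A.PosDef) {x : ℝ} (hx : x ∈ spectrum ℝ A) : 0 < x :=
  (isStrictlyPositive_iff_posDef.mpr hA).spectrum_pos hx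

lemma Matrix.PosDef.mpow_mul_mpow (hA : A.PosDef) (r s : ℝ) :
    mpow A r * mpow A s = mpow A (r + s) := by
  rw [mpow_eq_cfc hA.isHermitian, mpow_eq_cfc hA.isHermitian, mpow_eq_cfc hA.isHermitian,
    ← cfc_mul (fun x : ℝ => x ^ r) _ A (finite_real_spectrum.continuousOn _)
      (finite_real_spectrum.continuousOn _)]
  exact cfc_congr fun x hx => (Real.rpow_add (hA.spectrum_pos hx) r s).symm

end mpow

namespace Matrix.PosDef

variable {d : ℕ} {ρ σ : Matrix (Fin d) (Fin d) ℂ}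

lemma mpow_half_mul_mpow_half (hρ : ρ.PosDef) : mpow ρ (1 / 2) * mpow ρ (1 / 2) = ρ := by
  rw [hρ.mpow_mul_mpow, add_halves, mpow_one hρ.isHermitian]

lemma mpow_half_mul_mpow_neg_half (hρ : ρ.PosDef) :
    mpow ρ (1 / 2) * mpow ρ (-(1 / 2)) = 1 := by
  rw [hρ.mpow_mul_mpow, add_neg_cancel, mpow_zero hρ.isHermitian]

lemma mpow_neg_half_mul_mpow_half (hρ : ρ.PosDef) :
    mpow ρ (-(1 / 2)) * mpow ρ (1 / 2) = 1 := by
  rw [hρ.mpow_mul_mpow, neg_add_cancel, mpow_zero hρ.isHermitian]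

lemma mpow_half_conj_mpow_neg_half_conj (hρ : ρ.PosDef) (σ : Matrix (Fin d) (Fin d) ℂ) :
    mpow ρ (1 / 2) * (mpow ρ (-(1 / 2)) * σ * mpow ρ (-(1 / 2))) * mpow ρ (1 / 2) = σ := by
  simp only [← mul_assoc, hρ.mpow_half_mul_mpow_neg_half, one_mul]
  rw [mul_assoc, hρ.mpow_neg_half_mul_mpow_half, mul_one]

lemma isSelfAdjoint_mpow_neg_half_conj (hρ : ρ.PosDef) (hσ : σ.IsHermitian) :
    IsSelfAdjoint (mpow ρ (-(1 / 2)) * σ * mpow ρ (-(1 / 2))) := by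
  have hQ := isSelfAdjoint_mpow hρ.isHermitian (-(1 / 2))
  simpa only [hQ.star_eq] using hσ.isSelfAdjoint.conjugate (mpow ρ (-(1 / 2)))

lemma posDef_mpow_neg_half_conj (hρ : ρ.PosDef) (hσ : σ.PosDef) :
    (mpow ρ (-(1 / 2)) * σ * mpow ρ (-(1 / 2))).PosDef := by
  have hQ : (mpow ρ (-(1 / 2)))ᴴ = mpow ρ (-(1 / 2)) := isSelfAdjoint_mpow hρ.isHermitian _
  have hinj : Function.Injective (mpow ρ (-(1 / 2))).mulVec := Function.LeftInverse.injective
    (g := (mpow ρ (1 / 2)).mulVec) fun v => by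
      rw [mulVec_mulVec, hρ.mpow_half_mul_mpow_neg_half, one_mulVec]
  have hconj := hσ.conjTranspose_mul_mul_same hinj
  rwa [hQ] at hconj

lemma sub_eq_mpow_half_conj_cfc (hρ : ρ.PosDef) (hσ : σ.IsHermitian) :
    σ - ρ = mpow ρ (1 / 2) *
      cfc (fun x : ℝ => x - 1) (mpow ρ (-(1 / 2)) * σ * mpow ρ (-(1 / 2))) * mpow ρ (1 / 2) := by
  have hA := hρ.isSelfAdjoint_mpow_neg_half_conj hσ
  set A := mpow ρ (-(1 / 2)) * σ * mpow ρ (-(1 / 2))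
  rw [cfc_sub (fun x : ℝ => x) (fun _ => 1), cfc_id' ℝ A, cfc_const_one ℝ A, mul_sub, sub_mul,
    mul_one, hρ.mpow_half_conj_mpow_neg_half_conj, hρ.mpow_half_mul_mpow_half]

lemma sub_mul_inv_mul_eq_mpow_half_conj_cfc (hρ : ρ.PosDef) (hσ : σ.PosDef) :
    ρ - ρ * σ⁻¹ * ρ = mpow ρ (1 / 2) *
      cfc (fun x : ℝ => 1 - x⁻¹) (mpow ρ (-(1 / 2)) * σ * mpow ρ (-(1 / 2))) * mpow ρ (1 / 2) := by
  have hA := hρ.posDef_mpow_neg_half_conj hσ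
  have hinv : (mpow ρ (-(1 / 2)))⁻¹ = mpow ρ (1 / 2) :=
    inv_eq_left_inv hρ.mpow_half_mul_mpow_neg_half
  set A := mpow ρ (-(1 / 2)) * σ * mpow ρ (-(1 / 2))
  have hAinv : mpow ρ (1 / 2) * A⁻¹ * mpow ρ (1 / 2) = ρ * σ⁻¹ * ρ := by
    calc _ = mpow ρ (1 / 2) * mpow ρ (1 / 2) * σ⁻¹ * (mpow ρ (1 / 2) * mpow ρ (1 / 2)) := by
          rw [mul_inv_rev, mul_inv_rev, hinv]
          simp only [mul_assoc]
      _ = ρ * σ⁻¹ * ρ := by rw [hρ.mpow_half_mul_mpow_half]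
  rw [cfc_sub (fun _ : ℝ => 1) (fun x => x⁻¹) A (hg := finite_real_spectrum.continuousOn _),
    cfc_const_one ℝ A hA.isHermitian.isSelfAdjoint,
    cfc_ringInverse_id A hA.isUnit hA.isHermitian.isSelfAdjoint, ← nonsing_inv_eq_ringInverse,
    mul_sub, sub_mul, mul_one, hρ.mpow_half_mul_mpow_half, hAinv]

lemma Tq_eq_mpow_half_conj_cfc (hρ : ρ.PosDef) (hσ : σ.IsHermitian) (q : ℝ) :
    Tq ρ σ q = mpow ρ (1 / 2) *
      cfc (Real.tsallisLog q) (mpow ρ (-(1 / 2)) * σ * mpow ρ (-(1 / 2))) * mpow ρ (1 / 2) := by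
  have hA := hρ.isSelfAdjoint_mpow_neg_half_conj hσ
  set A := mpow ρ (-(1 / 2)) * σ * mpow ρ (-(1 / 2))
  have hcfc : cfc (Real.tsallisLog q) A = (1 - q)⁻¹ • (mpow A (1 - q) - 1) := by
    have hlog : Real.tsallisLog q = fun x => (1 - q)⁻¹ • (x ^ (1 - q) - 1) := by
      ext x
      rw [Real.tsallisLog, smul_eq_mul, inv_mul_eq_div]
    rw [hlog, cfc_smul _ _ _ (finite_real_spectrum.continuousOn _),
      cfc_sub _ _ _ (finite_real_spectrum.continuousOn _), cfc_const_one ℝ A, mpow_eq_cfc hA]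
  rw [Tq, hcfc, mul_smul_comm, smul_mul_assoc, mul_sub, sub_mul, mul_one,
    hρ.mpow_half_mul_mpow_half, ← Complex.ofReal_inv, Complex.coe_smul]

end Matrix.PosDef

theorem tsallis_operator_entropy_bounds {d : ℕ} (ρ σ : Matrix (Fin d) (Fin d) ℂ)
    (hρ : ρ.PosDef) (hσ : σ.PosDef) (q : ℝ) (hq0 : 0 ≤ q) (hq1 : q < 1) :
    (Tq ρ σ q - (ρ - ρ * σ⁻¹ * ρ)).PosSemidef ∧ ((σ - ρ) - Tq ρ σ q).PosSemidef := by
  have hA := hρ.posDef_mpow_neg_half_conj hσ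
  have hP := isSelfAdjoint_mpow hρ.isHermitian (1 / 2)
  rw [← le_iff, ← le_iff, hρ.Tq_eq_mpow_half_conj_cfc hσ.isHermitian,
    hρ.sub_mul_inv_mul_eq_mpow_half_conj_cfc hσ, hρ.sub_eq_mpow_half_conj_cfc hσ.isHermitian]
  exact ⟨conjugate_cfc_le_conjugate_cfc hP fun x hx =>
      Real.one_sub_inv_le_tsallisLog hq1 (hA.spectrum_pos hx),
    conjugate_cfc_le_conjugate_cfc hP fun x hx =>
      Real.tsallisLog_le_sub_one hq0 hq1 (hA.spectrum_pos hx)⟩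
end

section
/- For positive invertible operators ρ and σ on a finite-dimensional Hilbert space and q ∈ [0,1), T_q(ρ||σ) = 0 if and only if ρ = σ. -/
open Matrix
open scoped ComplexOrder

/-!
Once `mpow` is identified with the continuous functional calculus power `ρ ^ r`, write
`X = ρ^{-1/2} σ ρ^{-1/2}`, which is again strictly positive. Cancelling the invertible factor
`ρ^{1/2}`, `T_q(ρ‖σ) = 0` says `X ^ (1 - q) = 1`; raising to the power `(1 - q)⁻¹` gives `X = 1`,
that is `σ = ρ`.
-/

namespace CFC

variable {A : Type*} [PartialOrder A] [Ring A] [StarRing A] [TopologicalSpace A]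
  [StarOrderedRing A] [Algebra ℝ A] [ContinuousFunctionalCalculus ℝ A IsSelfAdjoint]
  [NonnegSpectrumClass ℝ A]

lemma rpow_eq_one_iff [IsSemitopologicalRing A] [T2Space A] {a : A} {r : ℝ} (hr : r ≠ 0)
    (ha : IsStrictlyPositive a) : a ^ r = 1 ↔ a = 1 := by
  refine ⟨fun h => ?_, fun h => by rw [h, one_rpow]⟩
  rw [← rpow_rpow_inv a r hr, h, one_rpow]

lemma rpow_half_mul_rpow_half {a : A} (ha : IsStrictlyPositive a) :
    a ^ (1 / 2 : ℝ) * a ^ (1 / 2 : ℝ) = a := by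
  rw [← rpow_add ha.isUnit]
  norm_num [rpow_one a]

lemma rpow_half_mul_mul_rpow_half_eq_self_iff {a b : A} (ha : IsStrictlyPositive a) :
    a ^ (1 / 2 : ℝ) * b * a ^ (1 / 2 : ℝ) = a ↔ b = 1 := by
  have hu : IsUnit (a ^ (1 / 2 : ℝ)) := (ha.rpow a _).isUnit
  calc a ^ (1 / 2 : ℝ) * b * a ^ (1 / 2 : ℝ) = a
      ↔ a ^ (1 / 2 : ℝ) * b * a ^ (1 / 2 : ℝ) = a ^ (1 / 2 : ℝ) * 1 * a ^ (1 / 2 : ℝ) := by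
        rw [mul_one, rpow_half_mul_rpow_half ha]
    _ ↔ b = 1 := by rw [hu.mul_left_inj, hu.mul_right_inj]

lemma rpow_neg_half_mul_mul_rpow_neg_half_eq_one_iff {a b : A} (ha : IsStrictlyPositive a) :
    a ^ (-(1 / 2) : ℝ) * b * a ^ (-(1 / 2) : ℝ) = 1 ↔ b = a := by
  have hu : IsUnit (a ^ (-(1 / 2) : ℝ)) := (ha.rpow a _).isUnit
  have hinv : a ^ (-(1 / 2) : ℝ) * a * a ^ (-(1 / 2) : ℝ) = 1 := calc
    _ = a ^ (-(1 / 2) : ℝ) * (a ^ (1 / 2 : ℝ) * a ^ (1 / 2 : ℝ)) * a ^ (-(1 / 2) : ℝ) := by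
      rw [rpow_half_mul_rpow_half ha]
    _ = (a ^ (-(1 / 2) : ℝ) * a ^ (1 / 2 : ℝ)) * (a ^ (1 / 2 : ℝ) * a ^ (-(1 / 2) : ℝ)) := by
      simp only [mul_assoc]
    _ = 1 := by rw [rpow_neg_mul_rpow _ ha, rpow_mul_rpow_neg _ ha, one_mul]
  rw [← hinv, hu.mul_left_inj, hu.mul_right_inj]

end CFC

open scoped MatrixOrder

lemma mpow_eq_rpow {d : ℕ} {A : Matrix (Fin d) (Fin d) ℂ} (hA : A.PosSemidef) (r : ℝ) :
    mpow A r = A ^ r := by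
  rw [mpow, dif_pos hA.1, CFC.rpow_eq_cfc_real hA.nonneg, hA.1.cfc_eq, IsHermitian.cfc,
    Unitary.conjStarAlgAut_apply]
  rfl

theorem tsallis_operator_entropy_eq_zero_iff_general {d : ℕ} (ρ σ : Matrix (Fin d) (Fin d) ℂ)
    (hρ : ρ.PosDef) (hσ : σ.PosDef) (q : ℝ) (hq1 : q < 1) :
    Tq ρ σ q = 0 ↔ ρ = σ := by
  have hρ' := hρ.isStrictlyPositive
  have hX : (ρ ^ (-(1 / 2) : ℝ) * σ * ρ ^ (-(1 / 2) : ℝ)).PosDef := by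
    rw [← isStrictlyPositive_iff_posDef]
    exact hσ.isStrictlyPositive.conjugate_of_isUnit_of_isSelfAdjoint _ _ (hρ'.rpow ρ _).isUnit
  have hc : ((1 - q : ℝ) : ℂ)⁻¹ ≠ 0 := inv_ne_zero (Complex.ofReal_ne_zero.mpr (by linarith))
  simp only [Tq, smul_eq_zero, hc, false_or, sub_eq_zero, mpow_eq_rpow hρ.posSemidef]
  rw [mpow_eq_rpow hX.posSemidef, CFC.rpow_half_mul_mul_rpow_half_eq_self_iff hρ',
    CFC.rpow_eq_one_iff (by linarith) hX.isStrictlyPositive,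
    CFC.rpow_neg_half_mul_mul_rpow_neg_half_eq_one_iff hρ', eq_comm]

theorem tsallis_operator_entropy_eq_zero_iff {d : ℕ} (ρ σ : Matrix (Fin d) (Fin d) ℂ)
    (hρ : ρ.PosDef) (hσ : σ.PosDef) (q : ℝ) (hq0 : 0 ≤ q) (hq1 : q < 1) :
    Tq ρ σ q = 0 ↔ ρ = σ :=
  tsallis_operator_entropy_eq_zero_iff_general ρ σ hρ hσ q hq1
end
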